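/- Let d ≥ 2 and let q₁ = q₂ = ⋯ = q_d = q for an integer q ≥ 2. Then the range of Q̂ is exactly the interval [−1/(d−1), 1]: {Q̂(t) : t ∈ ℝ^d} = [−1/(d−1), 1]. -/
import Mathlib


open Finset Real

/-- `Q̂(t) = (1/D)·Σ_{i≠j} √(q_i q_j)·cos(t_i − t_j)`, where `D = (d−1)(q₁+⋯+q_d)`. -/
noncomputable def Qhat (d : ℕ) (q : Fin d → ℕ) (t : Fin d → ℝ) : ℝ :=
  (1 / (((d : ℝ) - 1) * ∑ j, (q j : ℝ))) *
    ∑ p ∈ Finset.univ.offDiag,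
      Real.sqrt ((q p.1 : ℝ) * (q p.2 : ℝ)) * Real.cos (t p.1 - t p.2)

lemma Qhat_eq (d : ℕ) (hd : 2 ≤ d) (q : ℕ) (hq : 2 ≤ q) (t : Fin d → ℝ) :
    Qhat d (fun _ => q) t =
      ((∑ i, Real.cos (t i)) ^ 2 + (∑ i, Real.sin (t i)) ^ 2 - d) / (((d : ℝ) - 1) * d) := by
  have hq0 : (0 : ℝ) < q := by positivity
  have hd0 : (0 : ℝ) < d := by positivity
  have hd1 : (0 : ℝ) < (d : ℝ) - 1 := by
    have : (2 : ℝ) ≤ d := by exact_mod_cast hd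
    linarith
  have hsqrt : Real.sqrt ((q : ℝ) * (q : ℝ)) = q := Real.sqrt_mul_self hq0.le
  have hprod : ∑ p ∈ (Finset.univ ×ˢ Finset.univ : Finset (Fin d × Fin d)),
      Real.cos (t p.1 - t p.2)
      = (∑ i, Real.cos (t i)) ^ 2 + (∑ i, Real.sin (t i)) ^ 2 := by
    rw [Finset.sum_product]
    have : ∀ i : Fin d, ∑ j, Real.cos (t i - t j)
        = Real.cos (t i) * (∑ j, Real.cos (t j)) + Real.sin (t i) * (∑ j, Real.sin (t j)) := by
      intro i
      simp only [Real.cos_sub]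
      rw [Finset.sum_add_distrib, ← Finset.mul_sum, ← Finset.mul_sum]
    rw [Finset.sum_congr rfl fun i _ => this i, Finset.sum_add_distrib,
      ← Finset.sum_mul, ← Finset.sum_mul]
    ring
  have hoff : ∑ p ∈ (Finset.univ : Finset (Fin d)).offDiag, Real.cos (t p.1 - t p.2)
      = (∑ i, Real.cos (t i)) ^ 2 + (∑ i, Real.sin (t i)) ^ 2 - d := by
    have hsplit : ∑ p ∈ (Finset.univ ×ˢ Finset.univ : Finset (Fin d × Fin d)),
        Real.cos (t p.1 - t p.2)
        = (∑ p ∈ (Finset.univ : Finset (Fin d)).diag, Real.cos (t p.1 - t p.2)) +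
          ∑ p ∈ (Finset.univ : Finset (Fin d)).offDiag, Real.cos (t p.1 - t p.2) := by
      rw [← Finset.diag_union_offDiag, Finset.sum_union (Finset.disjoint_diag_offDiag _)]
    have hdiag : ∑ p ∈ (Finset.univ : Finset (Fin d)).diag, Real.cos (t p.1 - t p.2) = d := by
      rw [Finset.sum_diag]
      simp
    rw [hprod] at hsplit
    rw [hdiag] at hsplit
    linarith
  unfold Qhat
  simp only [hsqrt]
  rw [← Finset.mul_sum, hoff]
  rw [Finset.sum_const, Finset.card_univ, Fintype.card_fin, nsmul_eq_mul]
  field_simp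

lemma Qhat_mem (d : ℕ) (hd : 2 ≤ d) (q : ℕ) (hq : 2 ≤ q) (t : Fin d → ℝ) :
    Qhat d (fun _ => q) t ∈ Set.Icc (-(1 / ((d : ℝ) - 1))) 1 := by
  have hd1 : (0 : ℝ) < (d : ℝ) - 1 := by
    have : (2 : ℝ) ≤ d := by exact_mod_cast hd
    linarith
  have hd0 : (0 : ℝ) < d := by positivity
  rw [Qhat_eq d hd q hq t]
  set C := ∑ i, Real.cos (t i) with hC
  set S := ∑ i, Real.sin (t i) with hS
  have hub : C ^ 2 + S ^ 2 ≤ (d : ℝ) ^ 2 := by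
    have := Qhat_eq d hd q hq t -- not needed
    have h1 : C ^ 2 + S ^ 2 = ∑ p ∈ (Finset.univ ×ˢ Finset.univ : Finset (Fin d × Fin d)),
        Real.cos (t p.1 - t p.2) := by
      rw [Finset.sum_product]
      have : ∀ i : Fin d, ∑ j, Real.cos (t i - t j)
          = Real.cos (t i) * C + Real.sin (t i) * S := by
        intro i
        simp only [Real.cos_sub]
        rw [Finset.sum_add_distrib, ← Finset.mul_sum, ← Finset.mul_sum]
      rw [Finset.sum_congr rfl fun i _ => this i, Finset.sum_add_distrib,
        ← Finset.sum_mul, ← Finset.sum_mul, ← hC, ← hS]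
      ring
    have h2 : ∑ p ∈ (Finset.univ ×ˢ Finset.univ : Finset (Fin d × Fin d)),
        Real.cos (t p.1 - t p.2) ≤ ∑ _p ∈ (Finset.univ ×ˢ Finset.univ : Finset (Fin d × Fin d)),
        (1 : ℝ) := Finset.sum_le_sum fun p _ => Real.cos_le_one _
    simp only [Finset.sum_const, nsmul_eq_mul, mul_one] at h2
    rw [h1]
    calc _ ≤ ((Finset.univ ×ˢ Finset.univ : Finset (Fin d × Fin d)).card : ℝ) := h2
    _ = (d : ℝ) ^ 2 := by
      simp [Finset.card_product, sq]
  have hlb : (0 : ℝ) ≤ C ^ 2 + S ^ 2 := by positivity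
  have hinv : ((d : ℝ) - 1) * (1 / ((d : ℝ) - 1)) = 1 := by field_simp
  constructor
  · rw [le_div_iff₀ (by positivity)]
    nlinarith
  · rw [div_le_one (by positivity)]
    nlinarith

lemma sum_exp_root (d : ℕ) (hd : 2 ≤ d) :
    ∑ j ∈ Finset.range d, Complex.exp ((2 * π * j / d : ℝ) * Complex.I) = 0 := by
  have hd0 : (d : ℕ) ≠ 0 := by omega
  have hprim : IsPrimitiveRoot (Complex.exp (2 * π * Complex.I / d)) d :=
    Complex.isPrimitiveRoot_exp d hd0
  have hz := hprim.geom_sum_eq_zero (by omega : 1 < d)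
  rw [← hz]
  apply Finset.sum_congr rfl
  intro j _
  rw [← Complex.exp_nat_mul]
  congr 1
  have : (d : ℂ) ≠ 0 := by exact_mod_cast (by positivity : (0:ℝ) < (d:ℝ)).ne'
  push_cast
  field_simp

theorem Qhat_range_equal_qs (d : ℕ) (hd : 2 ≤ d) (q : ℕ) (hq : 2 ≤ q) :
    Set.range (Qhat d (fun _ => q)) = Set.Icc (-(1 / ((d : ℝ) - 1))) 1 := by
  have hd1 : (0 : ℝ) < (d : ℝ) - 1 := by
    have : (2 : ℝ) ≤ d := by exact_mod_cast hd
    linarith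
  have hd0 : (0 : ℝ) < d := by positivity
  apply Set.Subset.antisymm
  · rintro x ⟨t, rfl⟩
    exact Qhat_mem d hd q hq t
  · -- range is preconnected, contains both endpoints
    have hcont : Continuous (Qhat d (fun _ => q)) := by
      unfold Qhat
      fun_prop
    have hconn : IsPreconnected (Set.range (Qhat d (fun _ => q))) := by
      rw [← Set.image_univ]
      exact isPreconnected_univ.image _ hcont.continuousOn
    have h1 : (1 : ℝ) ∈ Set.range (Qhat d (fun _ => q)) := by
      refine ⟨fun _ => 0, ?_⟩
      rw [Qhat_eq d hd q hq]
      simp only [Real.cos_zero, Real.sin_zero, Finset.sum_const, Finset.card_univ,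
        Fintype.card_fin, nsmul_eq_mul, mul_one, mul_zero]
      field_simp
      ring
    have h2 : -(1 / ((d : ℝ) - 1)) ∈ Set.range (Qhat d (fun _ => q)) := by
      refine ⟨fun j => 2 * π * j / d, ?_⟩
      rw [Qhat_eq d hd q hq]
      have hz := sum_exp_root d hd
      have hCre : ∑ i : Fin d, Real.cos (2 * π * i / d) = 0 := by
        have h := congrArg Complex.re hz
        rw [Complex.re_sum] at h
        simp only [Complex.exp_ofReal_mul_I_re] at h
        rw [Fin.sum_univ_eq_sum_range (fun j => Real.cos (2 * π * j / d)) d]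
        exact h
      have hSim : ∑ i : Fin d, Real.sin (2 * π * i / d) = 0 := by
        have h := congrArg Complex.im hz
        rw [Complex.im_sum] at h
        simp only [Complex.exp_ofReal_mul_I_im] at h
        rw [Fin.sum_univ_eq_sum_range (fun j => Real.sin (2 * π * j / d)) d]
        exact h
      rw [hCre, hSim]
      field_simp
      ring
    exact hconn.Icc_subset h2 h1
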